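/- arXiv:1804.11340 — 4 statements merged into one kernel-verified Lean document; each statement's English description precedes it below -/
import Mathlib

section
/- Let m₁ : ℂ₊ → ℂ be an analytic function with nonnegative imaginary part satisfying, with ζ = 1 - z and a fixed integer β* ≥ 1, the equation 1 - ζm₁(z) + ζ^{β*} m₁(z)^{β*+1} = 0 for all z ∈ ℂ₊. Then (ζ m₁)^{β*+1} = -ζ(1 - ζ m₁); consequently, if |ζ| ≤ 4^{-(β*+1)} then |ζ m₁(z)| ≤ 2|ζ|^{1/(β*+1)} < 1/2. -/
/-!
Multiplying the equation by `ζ` gives `(ζ m₁)^(β*+1) = -ζ (1 - ζ m₁)`, so `r = |ζ m₁|` satisfies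
`r^(β*+1) ≤ |ζ| (1 + r)`. For `|ζ| < 1/2` this forces `r < 1`, hence `r^(β*+1) ≤ 2|ζ|`, and taking
`(β*+1)`-th roots gives `r ≤ 2 |ζ|^(1/(β*+1))`. If moreover `|ζ| ≤ 4^(-(β*+1))`, then
`r^(β*+1) < 2 · 4^(-(β*+1)) ≤ 2^(-(β*+1))`, i.e. `r < 1/2`.
-/

lemma mul_pow_succ_eq_neg_mul_one_sub {R : Type*} [CommRing R] {ζ m : R} {β : ℕ}
    (h : 1 - ζ * m + ζ ^ β * m ^ (β + 1) = 0) :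
    (ζ * m) ^ (β + 1) = -ζ * (1 - ζ * m) := by
  rw [mul_pow, pow_succ]
  linear_combination ζ * h

lemma norm_pow_le_norm_mul_one_add {𝕜 : Type*} [NormedDivisionRing 𝕜] {ζ w : 𝕜} {n : ℕ}
    (h : w ^ n = -ζ * (1 - w)) :
    ‖w‖ ^ n ≤ ‖ζ‖ * (1 + ‖w‖) :=
  calc ‖w‖ ^ n = ‖ζ‖ * ‖1 - w‖ := by rw [← norm_pow, h, norm_mul, norm_neg]
    _ ≤ ‖ζ‖ * (1 + ‖w‖) := by
      gcongr
      simpa using norm_sub_le (1 : 𝕜) w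

section PowLeMulOneAdd

variable {r a : ℝ} {n : ℕ}

lemma lt_one_of_pow_le_mul_one_add (h : r ^ n ≤ a * (1 + r)) (hn : n ≠ 0) (ha : a < 1 / 2) :
    r < 1 := by
  by_contra! hr
  have : r ≤ r ^ n := le_self_pow₀ hr hn
  nlinarith

lemma le_two_mul_rpow_of_pow_le_mul_one_add (h : r ^ n ≤ a * (1 + r)) (hn : n ≠ 0)
    (hr : 0 ≤ r) (ha : 0 ≤ a) (hr1 : r < 1) :
    r ≤ 2 * a ^ (1 / (n : ℝ)) := by
  have hpow : r ^ n ≤ 2 * a := by nlinarith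
  rw [one_div]
  calc r = (r ^ n) ^ (n : ℝ)⁻¹ := (Real.pow_rpow_inv_natCast hr hn).symm
    _ ≤ (2 * a) ^ (n : ℝ)⁻¹ := by gcongr
    _ = 2 ^ (n : ℝ)⁻¹ * a ^ (n : ℝ)⁻¹ := Real.mul_rpow zero_le_two ha
    _ ≤ 2 * a ^ (n : ℝ)⁻¹ := by
      gcongr
      exact Real.rpow_le_self_of_one_le one_le_two
        (inv_le_one_of_one_le₀ (by exact_mod_cast Nat.one_le_iff_ne_zero.mpr hn))

lemma lt_half_of_pow_le_mul_one_add (h : r ^ n ≤ a * (1 + r)) (hn : n ≠ 0)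
    (hr : 0 ≤ r) (hr1 : r < 1) (ha : a ≤ (4 ^ n)⁻¹) :
    r < 1 / 2 := by
  have h2n : (2 : ℝ) ≤ 2 ^ n := le_self_pow₀ one_le_two hn
  have hpow : r ^ n < (1 / 2) ^ n :=
    calc r ^ n ≤ (4 ^ n)⁻¹ * (1 + r) := h.trans (by gcongr)
      _ < (4 ^ n)⁻¹ * 2 := by gcongr; linarith
      _ ≤ (1 / 2) ^ n := by
        rw [show (4 : ℝ) ^ n = 2 ^ n * 2 ^ n by rw [← mul_pow]; norm_num, one_div_pow]
        field_simp
        exact h2n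
  exact lt_of_pow_lt_pow_left₀ n (by norm_num) hpow

end PowLeMulOneAdd

theorem stmt_8_general (βs : ℕ) (z : ℂ) (m₁ : ℂ)
    (heq : 1 - (1 - z) * m₁ + (1 - z) ^ βs * m₁ ^ (βs + 1) = 0) :
    ((1 - z) * m₁) ^ (βs + 1) = -(1 - z) * (1 - (1 - z) * m₁) ∧
    (‖1 - z‖ ≤ (4:ℝ) ^ (-((βs : ℤ) + 1)) →
      ‖(1 - z) * m₁‖ ≤ 2 * (‖1 - z‖) ^ ((1:ℝ) / (βs + 1)) ∧
      ‖(1 - z) * m₁‖ < 1 / 2) := by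
  have hw := mul_pow_succ_eq_neg_mul_one_sub heq
  refine ⟨hw, fun hsmall => ?_⟩
  have hζ : ‖1 - z‖ ≤ (4 ^ (βs + 1))⁻¹ := by
    rwa [← zpow_natCast, ← zpow_neg, Nat.cast_succ]
  have hquarter : ‖1 - z‖ < 1 / 2 :=
    calc ‖1 - z‖ ≤ (4 ^ (βs + 1))⁻¹ := hζ
      _ ≤ 4⁻¹ := inv_anti₀ (by norm_num) (le_self_pow₀ (by norm_num) βs.succ_ne_zero)
      _ < 1 / 2 := by norm_num
  have key := norm_pow_le_norm_mul_one_add hw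
  have hr1 := lt_one_of_pow_le_mul_one_add key βs.succ_ne_zero hquarter
  refine ⟨?_, lt_half_of_pow_le_mul_one_add key βs.succ_ne_zero (norm_nonneg _) hr1 hζ⟩
  simpa using le_two_mul_rpow_of_pow_le_mul_one_add key βs.succ_ne_zero (norm_nonneg _)
    (norm_nonneg _) hr1

/-- if `1 - ζm₁ + ζ^{β*}m₁^{β*+1} = 0` with `ζ = 1-z`, `z ∈ ℂ₊`, then
`(ζm₁)^{β*+1} = -ζ(1-ζm₁)`; and if `|ζ| ≤ 4^{-(β*+1)}` then
`|ζm₁| ≤ 2|ζ|^{1/(β*+1)} < 1/2`. -/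
theorem stmt_8 (βs : ℕ) (hβ : 1 ≤ βs) (z : ℂ) (hz : 0 < z.im) (m₁ : ℂ)
    (heq : 1 - (1 - z) * m₁ + (1 - z) ^ βs * m₁ ^ (βs + 1) = 0) :
    ((1 - z) * m₁) ^ (βs + 1) = -(1 - z) * (1 - (1 - z) * m₁) ∧
    (‖1 - z‖ ≤ (4:ℝ) ^ (-((βs : ℤ) + 1)) →
      ‖(1 - z) * m₁‖ ≤ 2 * (‖1 - z‖) ^ ((1:ℝ) / (βs + 1)) ∧
      ‖(1 - z) * m₁‖ < 1 / 2) :=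
  stmt_8_general βs z m₁ heq
end

section
/- Let m : ℂ₊ → ℂ be analytic with Im m(z) ≥ 0, satisfying 1 + (z-1)m(z) + Σ_{γ=1}^{γ*} m(z)/(ξ_γ⁻¹ - m(z)) = 0 where ξ₁,…,ξ_{γ*} are fixed nonzero real numbers and γ* ≥ 2. Then m is bounded on ℂ₊: there is C > 0 (depending only on γ* and the ξ_γ) with |m(z)| ≤ C for all z ∈ ℂ₊. In particular, if (z-1)m(z) → γ* - 1 as z → 1, then m would have negative imaginary part near z = 1, contradicting Im m ≥ 0. -/
/-!
If `Im m` vanishes somewhere, the open mapping theorem makes `m` constant. Otherwise `m` avoids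
the real numbers `ξ_γ⁻¹` and the equation reads `(z - 1) m = (γ* - 1) - ∑ ξ_γ⁻¹ / (ξ_γ⁻¹ - m)`.
Once `‖m‖ ≥ K` the sum has norm at most `1/4`, so `‖z - 1‖ ‖m‖ ∈ [3/4, γ*]` and
`Re ((z - 1) m) ≥ 3/4`; on the line `Re z = 1` the latter forces `Im m < 0`. Far from `1` this
gives `‖m‖ ≤ γ* / ‖z - 1‖`. Near `1` the values `‖m‖ ∈ [K, 3K)` are never taken, so by
connectedness `‖m‖ < K` there, as it is on the line `Re z = 1`.
-/

open Complex Metric Set Finset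

lemma DifferentiableOn.eqOn_of_im_nonneg_of_im_eq_zero {f : ℂ → ℂ} {U : Set ℂ}
    (hf : DifferentiableOn ℂ f U) (hU : IsOpen U) (hUc : IsPreconnected U)
    (hnn : ∀ z ∈ U, 0 ≤ (f z).im) {z₀ : ℂ} (hz₀ : z₀ ∈ U) (h0 : (f z₀).im = 0) :
    ∀ z ∈ U, f z = f z₀ := by
  rcases (hf.analyticOnNhd hU).is_constant_or_isOpen hUc with ⟨w, hw⟩ | hopen
  · intro z hz
    rw [hw z hz, hw z₀ hz₀]
  · -- `f z₀` lies on the boundary of the closed half-plane containing `f '' U`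
    obtain ⟨ε, hε, hball⟩ := Metric.isOpen_iff.1 (hopen U subset_rfl hU) (f z₀) ⟨z₀, hz₀, rfl⟩
    obtain ⟨z, hz, hfz⟩ := hball (show f z₀ - (ε / 2 : ℝ) * I ∈ ball (f z₀) ε by
      simp [abs_of_pos hε, hε])
    have him : (f z).im = -(ε / 2) := by simp [hfz, h0]
    linarith [hnn z hz]

lemma IsPreconnected.forall_lt_of_gap {α : Type*} [TopologicalSpace α] {s : Set α} {f : α → ℝ}
    {a b : ℝ} (hs : IsPreconnected s) (hf : ContinuousOn f s) (hab : a < b)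
    (hgap : ∀ x ∈ s, a ≤ f x → b ≤ f x) {x₀ : α} (hx₀ : x₀ ∈ s) (hfx₀ : f x₀ < a) :
    ∀ x ∈ s, f x < a := by
  intro x hx
  by_contra! hax
  obtain ⟨y, hy, hya⟩ := (hs.image f hf).Icc_subset (mem_image_of_mem f hx₀)
    (mem_image_of_mem f hx) ⟨hfx₀.le, hax⟩
  linarith [hgap y hy hya.ge]

lemma norm_div_sub_le {c w : ℂ} {r : ℝ} (hc : ‖c‖ ≤ r) (hw : 2 * r ≤ ‖w‖) :
    ‖c / (c - w)‖ ≤ 2 * r / ‖w‖ := by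
  rcases (norm_nonneg w).eq_or_lt with hw0 | hw0
  · have : c = 0 := norm_le_zero_iff.1 (by linarith [norm_nonneg c])
    simp [this, ← hw0]
  have hsub : ‖w‖ / 2 ≤ ‖c - w‖ := by
    have := norm_sub_norm_le w c
    rw [norm_sub_rev] at this
    linarith
  rw [norm_div, div_le_div_iff₀ (by linarith) hw0]
  nlinarith [norm_nonneg c]

lemma norm_sum_div_sub_le_quarter {ι : Type*} {s : Finset ι} {c : ι → ℂ} {w : ℂ} {r : ℝ}
    (hc : ∀ i ∈ s, ‖c i‖ ≤ r) (hw : 8 * #s * r ≤ ‖w‖) :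
    ‖∑ i ∈ s, c i / (c i - w)‖ ≤ 1 / 4 := by
  have hterm : ∀ i ∈ s, ‖c i / (c i - w)‖ ≤ 2 * r / ‖w‖ := by
    intro i hi
    have hs : (1 : ℝ) ≤ #s := by exact_mod_cast card_pos.2 ⟨i, hi⟩
    have hr : 0 ≤ r := (norm_nonneg _).trans (hc i hi)
    exact norm_div_sub_le (hc i hi) (by nlinarith)
  calc ‖∑ i ∈ s, c i / (c i - w)‖ ≤ #s * (2 * r / ‖w‖) :=
        (norm_sum_le _ _).trans (by simpa using sum_le_card_nsmul s _ _ hterm)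
    _ ≤ 1 / 4 := by
      rcases (norm_nonneg w).eq_or_lt with hw0 | hw0
      · simp [← hw0]
      · rw [mul_div_assoc', div_le_iff₀ hw0]
        linarith

lemma mul_eq_sub_sum_div_sub_of_eq_zero {ι : Type*} {s : Finset ι} {c : ι → ℂ} {z w : ℂ}
    (hw : ∀ i ∈ s, c i ≠ w) (h : 1 + (z - 1) * w + ∑ i ∈ s, w / (c i - w) = 0) :
    (z - 1) * w = (#s - 1) - ∑ i ∈ s, c i / (c i - w) := by
  have hterm : ∀ i ∈ s, w / (c i - w) = c i / (c i - w) - 1 := by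
    intro i hi
    have := sub_ne_zero.2 (hw i hi)
    field_simp
    ring
  rw [sum_congr rfl hterm, sum_sub_distrib, sum_const, nsmul_one] at h
  linear_combination h

lemma im_neg_of_ofReal_mul_I_mul_eq {y : ℝ} {w A : ℂ} (hy : 0 < y) (hA : 0 < A.re)
    (h : y * I * w = A) : w.im < 0 := by
  have hre : (y * I * w).re = -(y * w.im) := by simp
  rw [h] at hre
  nlinarith

lemma dyson_bounds_of_norm_large {ι : Type*} {s : Finset ι} {c : ι → ℂ} {z w : ℂ} {r : ℝ}
    (hs : 2 ≤ #s) (hc : ∀ i ∈ s, ‖c i‖ ≤ r) (hw : 8 * #s * r ≤ ‖w‖)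
    (hzw : (z - 1) * w = (#s - 1) - ∑ i ∈ s, c i / (c i - w)) :
    3 / 4 ≤ ‖z - 1‖ * ‖w‖ ∧ ‖z - 1‖ * ‖w‖ ≤ #s ∧ 3 / 4 ≤ ((z - 1) * w).re := by
  set E := ∑ i ∈ s, c i / (c i - w)
  have hE : ‖E‖ ≤ 1 / 4 := norm_sum_div_sub_le_quarter hc hw
  have hs' : (2 : ℝ) ≤ #s := by exact_mod_cast hs
  have hn : ‖(#s - 1 : ℂ)‖ = #s - 1 := by
    rw [show (#s - 1 : ℂ) = ((#s - 1 : ℝ) : ℂ) by push_cast; ring, norm_real, Real.norm_eq_abs,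
      abs_of_nonneg (by linarith)]
  rw [← norm_mul, hzw]
  refine ⟨?_, ?_, ?_⟩
  · linarith [norm_sub_norm_le (#s - 1 : ℂ) E]
  · linarith [norm_sub_le (#s - 1 : ℂ) E]
  · have hre : ((#s - 1 : ℂ) - E).re = #s - 1 - E.re := by simp
    linarith [(re_le_norm E).trans hE]

lemma norm_lt_of_norm_sub_one_lt {m : ℂ → ℂ} {K : ℝ} (hK : 0 < K)
    (hm : ContinuousOn m {z | 0 < z.im})
    (hlarge : ∀ z, 0 < z.im → K ≤ ‖m z‖ → 3 / 4 ≤ ‖z - 1‖ * ‖m z‖ ∧ z.re ≠ 1) :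
    ∀ z, 0 < z.im → ‖z - 1‖ < 1 / (4 * K) → ‖m z‖ < K := by
  set ρ := 1 / (4 * K)
  have hρ : 0 < ρ := by positivity
  set D := {z : ℂ | 0 < z.im} ∩ ball 1 ρ
  have hD : IsPreconnected D :=
    ((convex_halfSpace_im_gt 0).inter (convex_ball 1 ρ)).isPreconnected
  have hgap : ∀ z ∈ D, K ≤ ‖m z‖ → 3 * K ≤ ‖m z‖ := by
    rintro z ⟨hz, hzρ⟩ hKz
    have h34 := (hlarge z hz hKz).1
    rw [mem_ball, dist_eq] at hzρ
    have : ‖z - 1‖ * ‖m z‖ ≤ ρ * ‖m z‖ := by gcongr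
    have : ρ * (4 * K) = 1 := by simp only [ρ]; field_simp
    nlinarith
  set z₁ : ℂ := 1 + (ρ / 2 : ℝ) * I
  have hz₁ : z₁ ∈ D := by
    have him : z₁.im = ρ / 2 := by simp [z₁]
    have hdist : ‖z₁ - 1‖ = ρ / 2 := by simp [z₁, abs_of_pos hρ]
    exact ⟨show 0 < z₁.im by linarith, by rw [mem_ball, dist_eq]; linarith⟩
  have hmz₁ : ‖m z₁‖ < K :=
    not_le.1 fun h => (hlarge z₁ hz₁.1 h).2 (by simp [z₁])
  intro z hz hzρ
  exact hD.forall_lt_of_gap (hm.norm.mono Set.inter_subset_left) (by linarith) hgap hz₁ hmz₁ z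
    ⟨hz, by rwa [mem_ball, dist_eq]⟩

lemma exists_norm_le_of_dyson {ι : Type*} {s : Finset ι} {c : ι → ℂ} {m : ℂ → ℂ} (hs : 2 ≤ #s)
    (hm : ContinuousOn m {z | 0 < z.im}) (hpos : ∀ z, 0 < z.im → 0 < (m z).im)
    (heq : ∀ z, 0 < z.im → (z - 1) * m z = (#s - 1) - ∑ i ∈ s, c i / (c i - m z)) :
    ∃ C, ∀ z, 0 < z.im → ‖m z‖ ≤ C := by
  set r := 1 + ∑ i ∈ s, ‖c i‖
  have hc : ∀ i ∈ s, ‖c i‖ ≤ r := fun i hi =>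
    (single_le_sum (fun j _ => norm_nonneg (c j)) hi).trans (le_add_of_nonneg_left zero_le_one)
  have hs' : (2 : ℝ) ≤ #s := by exact_mod_cast hs
  set K := 8 * #s * r
  have hK : 0 < K := by positivity
  have hlarge : ∀ z, 0 < z.im → K ≤ ‖m z‖ →
      3 / 4 ≤ ‖z - 1‖ * ‖m z‖ ∧ ‖z - 1‖ * ‖m z‖ ≤ #s ∧ z.re ≠ 1 := by
    intro z hz hKz
    obtain ⟨hlow, hup, hre⟩ := dyson_bounds_of_norm_large hs hc hKz (heq z hz)
    refine ⟨hlow, hup, fun h1 => (hpos z hz).not_gt ?_⟩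
    have hz1 : z - 1 = z.im * I := by apply Complex.ext <;> simp [h1]
    exact im_neg_of_ofReal_mul_I_mul_eq hz (A := (z - 1) * m z) (by linarith) (by rw [hz1])
  have hnear := norm_lt_of_norm_sub_one_lt hK hm fun z hz hKz =>
    ⟨(hlarge z hz hKz).1, (hlarge z hz hKz).2.2⟩
  refine ⟨4 * #s * K, fun z hz => ?_⟩
  by_contra! hbig
  have hKz : K ≤ ‖m z‖ := by nlinarith
  have hfar : 1 / (4 * K) ≤ ‖z - 1‖ := not_lt.1 fun h => (hnear z hz h).not_ge hKz
  have : ‖m z‖ / (4 * K) ≤ #s := by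
    calc ‖m z‖ / (4 * K) = 1 / (4 * K) * ‖m z‖ := by ring
      _ ≤ ‖z - 1‖ * ‖m z‖ := by gcongr
      _ ≤ #s := (hlarge z hz hKz).2.1
  rw [div_le_iff₀ (by positivity)] at this
  linarith

theorem stmt_11_general (γs : ℕ) (hγ : 2 ≤ γs) (ξ : Fin γs → ℝ)
    (m : ℂ → ℂ)
    (hanal : DifferentiableOn ℂ m {z : ℂ | 0 < z.im})
    (hherg : ∀ z : ℂ, 0 < z.im → 0 ≤ (m z).im)
    (heq : ∀ z : ℂ, 0 < z.im → (∀ γ, ((ξ γ : ℂ))⁻¹ ≠ m z) →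
      1 + (z - 1) * m z + ∑ γ : Fin γs, m z / (((ξ γ : ℂ))⁻¹ - m z) = 0) :
    ∃ C : ℝ, 0 < C ∧ ∀ z : ℂ, 0 < z.im → ‖m z‖ ≤ C := by
  by_cases hreal : ∃ z₀, 0 < z₀.im ∧ (m z₀).im = 0
  · obtain ⟨z₀, hz₀, h0⟩ := hreal
    have hconst := hanal.eqOn_of_im_nonneg_of_im_eq_zero
      (isOpen_lt continuous_const continuous_im) (convex_halfSpace_im_gt 0).isPreconnected
      hherg hz₀ h0
    exact ⟨‖m z₀‖ + 1, by positivity, fun z hz => by rw [hconst z hz]; linarith⟩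
  push Not at hreal
  have hpos : ∀ z, 0 < z.im → 0 < (m z).im := fun z hz => (hherg z hz).lt_of_ne' (hreal z hz)
  have hdyson : ∀ z, 0 < z.im → (z - 1) * m z =
      (#(univ : Finset (Fin γs)) - 1) - ∑ γ, (ξ γ : ℂ)⁻¹ / ((ξ γ : ℂ)⁻¹ - m z) := by
    intro z hz
    have hne : ∀ γ, ((ξ γ : ℂ))⁻¹ ≠ m z := fun γ h => (hpos z hz).ne' (by simp [← h])
    exact mul_eq_sub_sum_div_sub_of_eq_zero (fun γ _ => hne γ) (heq z hz hne)
  obtain ⟨C, hC⟩ := exists_norm_le_of_dyson (by simpa using hγ) hanal.continuousOn hpos hdyson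
  exact ⟨max C 1, by positivity, fun z hz => (hC z hz).trans (le_max_left _ _)⟩

/-- a Herglotz-type analytic solution of the quadratic-polynomial Dyson
equation (diagonal form) is bounded on the upper half-plane. -/
theorem stmt_11 (γs : ℕ) (hγ : 2 ≤ γs) (ξ : Fin γs → ℝ) (hξ : ∀ γ, ξ γ ≠ 0)
    (m : ℂ → ℂ)
    (hanal : DifferentiableOn ℂ m {z : ℂ | 0 < z.im})
    (hherg : ∀ z : ℂ, 0 < z.im → 0 ≤ (m z).im)
    (heq : ∀ z : ℂ, 0 < z.im → (∀ γ, ((ξ γ : ℂ))⁻¹ ≠ m z) →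
      1 + (z - 1) * m z + ∑ γ : Fin γs, m z / (((ξ γ : ℂ))⁻¹ - m z) = 0) :
    ∃ C : ℝ, 0 < C ∧ ∀ z : ℂ, 0 < z.im → ‖m z‖ ≤ C :=
  stmt_11_general γs hγ ξ m hanal hherg heq
end

section
/- Suppose K₀ ∈ ℂ^{(γ*+1)×(γ*+1)} is block diagonal with (1,1)-entry 1 and lower-right block Ξ⁻¹ for a Hermitian invertible Ξ ∈ ℂ^{γ*×γ*}, and K_γ = e₁e_{γ+1}ᵗ + e_{γ+1}e₁ᵗ for 1 ≤ γ ≤ γ*. If M ∈ ℂ^{(γ*+1)×(γ*+1)} is block diagonal with (1,1)-entry M₁₁ and lower-right block M̂, and M solves I + (zJ - K₀)M + Σ_γ K_γ M K_γ M = 0 with J = e₁e₁ᵗ, then: (i) 1 + (z-1)M₁₁ + M₁₁ Tr(M̂) = 0, and (ii) M̂ = (Ξ⁻¹ - M₁₁ I)⁻¹ provided Ξ⁻¹ - M₁₁I is invertible. -/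
open Matrix

/-!
Since `M` is block diagonal and `K_γ` only couples the first coordinate with the `(γ+1)`-st,
`K_γ M K_γ M` is block diagonal with blocks `M̂_γγ M₁₁` and `M₁₁ e_γ e_γᵗ M̂`. Summing over `γ`
gives `M₁₁ Tr M̂` and `M₁₁ M̂`, so the Dyson equation splits into the scalar identity (i) and
`I - Ξ⁻¹ M̂ + M₁₁ M̂ = 0`, which says that `M̂` is a right inverse of `Ξ⁻¹ - M₁₁ I`.
-/

namespace Matrix

variable {l m n o ι R : Type*}

theorem sum_fromBlocks [AddCommMonoid R] (s : Finset ι) (A : ι → Matrix n l R)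
    (B : ι → Matrix n m R) (C : ι → Matrix o l R) (D : ι → Matrix o m R) :
    ∑ i ∈ s, fromBlocks (A i) (B i) (C i) (D i) =
      fromBlocks (∑ i ∈ s, A i) (∑ i ∈ s, B i) (∑ i ∈ s, C i) (∑ i ∈ s, D i) := by
  ext (i | i) (j | j) <;> simp [Matrix.sum_apply]

theorem of_ite_eq_single_default_left [Unique l] [DecidableEq l] [DecidableEq n] [Zero R]
    (j : n) (c : R) :
    (of fun (_ : l) j' => if j' = j then c else 0) = single default j c := by
  ext i j'
  simp [single, Unique.eq_default i, eq_comm]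

theorem of_ite_eq_single_default_right [Unique l] [DecidableEq l] [DecidableEq n] [Zero R]
    (i : n) (c : R) :
    (of fun i' (_ : l) => if i' = i then c else 0) = single i default c := by
  ext i' j
  simp [single, Unique.eq_default j, eq_comm]

theorem fromBlocks_offDiag_mul_blockDiag_sq [Fintype l] [Fintype n] [Semiring R]
    (A : Matrix l l R) (B : Matrix l n R) (C : Matrix n l R) (D : Matrix n n R) :
    fromBlocks 0 B C 0 * fromBlocks A 0 0 D * (fromBlocks 0 B C 0 * fromBlocks A 0 0 D) =
      fromBlocks (B * D * C * A) 0 0 (C * A * B * D) := by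
  simp [fromBlocks_multiply, Matrix.mul_assoc]

theorem sum_fromBlocks_single_mul_blockDiag_sq [Fintype l] [DecidableEq l] [Fintype n]
    [DecidableEq n] [Semiring R] (i : l) (A : Matrix l l R) (D : Matrix n n R) :
    ∑ γ : n, fromBlocks 0 (single i γ 1) (single γ i 1) 0 * fromBlocks A 0 0 D *
        (fromBlocks 0 (single i γ 1) (single γ i 1) 0 * fromBlocks A 0 0 D) =
      fromBlocks (single i i D.trace * A) 0 0 (A i i • D) := by
  simp only [fromBlocks_offDiag_mul_blockDiag_sq, sum_fromBlocks, Finset.sum_const_zero,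
    single_mul_mul_single, one_mul, mul_one, ← Finset.sum_mul]
  rw [sum_single_eq_diagonal, ← smul_one_eq_diagonal, smul_mul_assoc, one_mul]
  congr 2
  ext i' j'
  simp [Matrix.sum_apply, single, trace, Finset.sum_ite_irrel]

theorem eq_inv_of_one_sub_mul_add_smul_eq_zero [Fintype n] [DecidableEq n] [CommRing R]
    {X D : Matrix n n R} {a : R} (h : 1 - X * D + a • D = 0) : D = (X - a • 1)⁻¹ := by
  refine (inv_eq_right_inv ?_).symm
  rw [sub_mul, smul_one_mul]
  linear_combination (norm := abel) -h

end Matrix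

theorem stmt_18_general (γs : ℕ) (Ξ : Matrix (Fin γs) (Fin γs) ℂ)
    (z : ℂ) (M₁₁ : ℂ)
    (Mhat : Matrix (Fin γs) (Fin γs) ℂ)
    (K₀ : Matrix (Fin 1 ⊕ Fin γs) (Fin 1 ⊕ Fin γs) ℂ)
    (hK₀ : K₀ = Matrix.fromBlocks 1 0 0 Ξ⁻¹)
    (K : Fin γs → Matrix (Fin 1 ⊕ Fin γs) (Fin 1 ⊕ Fin γs) ℂ)
    (hK : ∀ γ : Fin γs, K γ = Matrix.fromBlocks 0
      (Matrix.of fun (_ : Fin 1) (j : Fin γs) => if j = γ then (1:ℂ) else 0)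
      (Matrix.of fun (i : Fin γs) (_ : Fin 1) => if i = γ then (1:ℂ) else 0) 0)
    (J : Matrix (Fin 1 ⊕ Fin γs) (Fin 1 ⊕ Fin γs) ℂ)
    (hJ : J = Matrix.fromBlocks 1 0 0 0)
    (M : Matrix (Fin 1 ⊕ Fin γs) (Fin 1 ⊕ Fin γs) ℂ)
    (hM : M = Matrix.fromBlocks (Matrix.of fun (_ _ : Fin 1) => M₁₁) 0 0 Mhat)
    (hDEL : 1 + (z • J - K₀) * M + ∑ γ : Fin γs, K γ * M * (K γ * M) = 0) :
    (1 + (z - 1) * M₁₁ + M₁₁ * Mhat.trace = 0) ∧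
    (IsUnit (Ξ⁻¹ - M₁₁ • (1 : Matrix (Fin γs) (Fin γs) ℂ)) →
      Mhat = (Ξ⁻¹ - M₁₁ • (1 : Matrix (Fin γs) (Fin γs) ℂ))⁻¹) := by
  simp only [hK, of_ite_eq_single_default_left, of_ite_eq_single_default_right] at hDEL
  subst hK₀ hJ hM
  rw [sum_fromBlocks_single_mul_blockDiag_sq, fromBlocks_smul, sub_eq_add_neg, fromBlocks_neg,
    fromBlocks_add, fromBlocks_multiply, ← fromBlocks_one, fromBlocks_add, fromBlocks_add,
    ← fromBlocks_zero, fromBlocks_inj] at hDEL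
  obtain ⟨h₁₁, -, -, h₂₂⟩ := hDEL
  refine ⟨?_, fun _ => eq_inv_of_one_sub_mul_add_smul_eq_zero ?_⟩
  · linear_combination (norm := (simp [Matrix.mul_apply, single]; ring))
      congrFun (congrFun h₁₁ 0) 0
  · simpa [sub_eq_add_neg] using h₂₂

/-- for the minimal linearization of `1 - xᵗΞx`, a block-diagonal solution `M`
of the Dyson equation `I + (zJ - K₀)M + Σ_γ K_γ M K_γ M = 0` satisfies
`1 + (z-1)M₁₁ + M₁₁ Tr M̂ = 0` and `M̂ = (Ξ⁻¹ - M₁₁ I)⁻¹` (when the latter is invertible). -/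
theorem stmt_18 (γs : ℕ) (hγ : 2 ≤ γs) (Ξ : Matrix (Fin γs) (Fin γs) ℂ)
    (hΞ : Ξ.IsHermitian) (hΞinv : IsUnit Ξ) (z : ℂ) (M₁₁ : ℂ)
    (Mhat : Matrix (Fin γs) (Fin γs) ℂ)
    (K₀ : Matrix (Fin 1 ⊕ Fin γs) (Fin 1 ⊕ Fin γs) ℂ)
    (hK₀ : K₀ = Matrix.fromBlocks 1 0 0 Ξ⁻¹)
    (K : Fin γs → Matrix (Fin 1 ⊕ Fin γs) (Fin 1 ⊕ Fin γs) ℂ)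
    (hK : ∀ γ : Fin γs, K γ = Matrix.fromBlocks 0
      (Matrix.of fun (_ : Fin 1) (j : Fin γs) => if j = γ then (1:ℂ) else 0)
      (Matrix.of fun (i : Fin γs) (_ : Fin 1) => if i = γ then (1:ℂ) else 0) 0)
    (J : Matrix (Fin 1 ⊕ Fin γs) (Fin 1 ⊕ Fin γs) ℂ)
    (hJ : J = Matrix.fromBlocks 1 0 0 0)
    (M : Matrix (Fin 1 ⊕ Fin γs) (Fin 1 ⊕ Fin γs) ℂ)
    (hM : M = Matrix.fromBlocks (Matrix.of fun (_ _ : Fin 1) => M₁₁) 0 0 Mhat)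
    (hDEL : 1 + (z • J - K₀) * M + ∑ γ : Fin γs, K γ * M * (K γ * M) = 0) :
    (1 + (z - 1) * M₁₁ + M₁₁ * Mhat.trace = 0) ∧
    (IsUnit (Ξ⁻¹ - M₁₁ • (1 : Matrix (Fin γs) (Fin γs) ℂ)) →
      Mhat = (Ξ⁻¹ - M₁₁ • (1 : Matrix (Fin γs) (Fin γs) ℂ))⁻¹) :=
  stmt_18_general γs Ξ z M₁₁ Mhat K₀ hK₀ K hK J hJ M hM hDEL
end

section
/- Let υ, ω ∈ ℂ satisfy (υ - 1 - ω)² = 4ω. Then for any k ≥ 2, the determinant of the k×k matrix with diagonal entries υ-1, entries υ above the diagonal (all positions (i,j) with j > i), and entries ω on the subdiagonal (positions (i+1,i)), zeros elsewhere below the subdiagonal, equals (υ-1)·k·((υ-1-ω)/2)^{k-1} − ω·(k−1)·((υ-1-ω)/2)^{k-2}. -/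
/-!
Expanding along the first column, the determinants `D n` of the `n × n` matrices with diagonal
`a`, constant `b` above the diagonal and `c` on the subdiagonal satisfy
`D (n + 2) = (a - c) * D (n + 1) - c * (b - a) * D n`. For `a = υ - 1`, `b = υ`, `c = ω` the
characteristic polynomial `x ^ 2 - (υ - 1 - ω) * x + ω` has the double root
`r = (υ - 1 - ω) / 2` precisely when `(υ - 1 - ω) ^ 2 = 4 * ω`, and then
`D (n + 1) = r ^ (n + 1) + (n + 1) * (a - r) * r ^ n`.
-/

open Matrix

section Hessenberg

variable {R : Type*} [CommRing R]

def hessenbergMatrix (a b c : R) (n : ℕ) : Matrix (Fin n) (Fin n) R :=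
  Matrix.of fun i j =>
    if i.val < j.val then b
    else if i = j then a
    else if j.val + 1 = i.val then c
    else 0

variable (a b c : R)

theorem hessenbergMatrix_succ_apply_succ {n : ℕ} (i j : Fin n) :
    hessenbergMatrix a b c (n + 1) i.succ j.succ = hessenbergMatrix a b c n i j := by
  simp [hessenbergMatrix, Fin.ext_iff]

theorem hessenbergMatrix_submatrix_succ (n : ℕ) :
    (hessenbergMatrix a b c (n + 1)).submatrix Fin.succ Fin.succ = hessenbergMatrix a b c n := by
  ext i j
  exact hessenbergMatrix_succ_apply_succ a b c i j

theorem det_eq_mul_det_submatrix_succ_of_row_zero {n : ℕ}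
    (M : Matrix (Fin (n + 1)) (Fin (n + 1)) R) (hM : ∀ j : Fin n, M 0 j.succ = 0) :
    M.det = M 0 0 * (M.submatrix Fin.succ Fin.succ).det := by
  rw [det_succ_row_zero, Fin.sum_univ_succ, Finset.sum_eq_zero fun j _ => by simp [hM j]]
  simp

/-- Deleting row `1` and column `0` leaves `hessenbergMatrix a b c (n + 1)` with its first
row `(a, b, …, b)` replaced by `(b, b, …, b)`. -/
theorem det_hessenbergMatrix_submatrix_succAbove_one (n : ℕ) :
    ((hessenbergMatrix a b c (n + 2)).submatrix (Fin.succAbove 1) Fin.succ).det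
      = (hessenbergMatrix a b c (n + 1)).det + (b - a) * (hessenbergMatrix a b c n).det := by
  set H := hessenbergMatrix a b c (n + 1)
  have hminor : (hessenbergMatrix a b c (n + 2)).submatrix (Fin.succAbove 1) Fin.succ
      = updateRow H 0 (H 0 + Pi.single 0 (b - a)) := by
    ext i j
    rcases Fin.eq_zero_or_eq_succ i with rfl | ⟨i, rfl⟩
    · rcases Fin.eq_zero_or_eq_succ j with rfl | ⟨j, rfl⟩ <;>
        simp [H, hessenbergMatrix, Fin.succAbove]
    · have hi : (Fin.succAbove 1 i.succ : Fin (n + 2)) = i.succ.succ := by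
        simp [Fin.succAbove, Fin.lt_def]
      rw [updateRow_ne (Fin.succ_ne_zero i), submatrix_apply, hi,
        hessenbergMatrix_succ_apply_succ]
  have hsingle : (updateRow H 0 (Pi.single 0 (b - a))).det
      = (b - a) * (hessenbergMatrix a b c n).det := by
    rw [det_eq_mul_det_submatrix_succ_of_row_zero _ fun j => by simp, ← Fin.succAbove_zero,
      submatrix_updateRow_succAbove, Fin.succAbove_zero, hessenbergMatrix_submatrix_succ,
      updateRow_self, Pi.single_eq_same]
  rw [hminor, det_updateRow_add, updateRow_eq_self, hsingle]

theorem det_hessenbergMatrix_add_two (n : ℕ) :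
    (hessenbergMatrix a b c (n + 2)).det
      = (a - c) * (hessenbergMatrix a b c (n + 1)).det
        - c * (b - a) * (hessenbergMatrix a b c n).det := by
  have h₀₀ : hessenbergMatrix a b c (n + 2) 0 0 = a := by simp [hessenbergMatrix]
  have h₁₀ : hessenbergMatrix a b c (n + 2) 1 0 = c := by simp [hessenbergMatrix, Fin.ext_iff]
  rw [det_succ_column_zero, Fin.sum_univ_succ, Fin.sum_univ_succ,
    Finset.sum_eq_zero fun i _ => by simp [hessenbergMatrix, Fin.ext_iff]]
  rw [Fin.succAbove_zero, hessenbergMatrix_submatrix_succ, Fin.succ_zero_eq_one,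
    det_hessenbergMatrix_submatrix_succAbove_one, h₀₀, h₁₀]
  simp only [Fin.val_zero, Fin.val_one, pow_zero, pow_one]
  ring

theorem det_hessenbergMatrix_one : (hessenbergMatrix a b c 1).det = a := by
  simp [hessenbergMatrix]

end Hessenberg

theorem eq_of_recurrence_double_root {R : Type*} [CommRing R] {D : ℕ → R} {r : R}
    (hD : ∀ n, D (n + 2) = 2 * r * D (n + 1) - r ^ 2 * D n) (n : ℕ) :
    D (n + 1) = D 0 * r ^ (n + 1) + (n + 1) * (D 1 - r * D 0) * r ^ n := by
  induction n using Nat.twoStepInduction with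
  | zero => ring
  | one => rw [hD 0]; push_cast; ring
  | more n ih₀ ih₁ => rw [hD (n + 1), ih₀, ih₁]; push_cast; ring

/-- determinant of the lower-Hessenberg matrix with diagonal `υ-1`,
all entries `υ` above the diagonal, and `ω` on the subdiagonal, given `(υ-1-ω)² = 4ω`. -/
theorem stmt_19 (k : ℕ) (hk : 2 ≤ k) (υ ω : ℂ) (h : (υ - 1 - ω) ^ 2 = 4 * ω)
    (A : Matrix (Fin k) (Fin k) ℂ)
    (hA : A = Matrix.of fun (i j : Fin k) =>
      if i.val < j.val then υ
      else if i = j then υ - 1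
      else if j.val + 1 = i.val then ω
      else 0) :
    A.det = (υ - 1) * (k : ℂ) * ((υ - 1 - ω) / 2) ^ (k - 1)
      - ω * ((k : ℂ) - 1) * ((υ - 1 - ω) / 2) ^ (k - 2) := by
  change A = hessenbergMatrix (υ - 1) υ ω k at hA
  subst hA
  set r := (υ - 1 - ω) / 2 with hr
  have hω : ω = r ^ 2 := by linear_combination -h / 4
  have hrec (n : ℕ) : (hessenbergMatrix (υ - 1) υ ω (n + 2)).det
      = 2 * r * (hessenbergMatrix (υ - 1) υ ω (n + 1)).det
        - r ^ 2 * (hessenbergMatrix (υ - 1) υ ω n).det := by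
    rw [det_hessenbergMatrix_add_two, ← hω, hr]
    ring
  obtain ⟨m, rfl⟩ : ∃ m, k = m + 1 + 1 := ⟨k - 2, by omega⟩
  rw [eq_of_recurrence_double_root (D := fun n => (hessenbergMatrix (υ - 1) υ ω n).det) hrec,
    det_isEmpty, det_hessenbergMatrix_one, hω]
  simp only [Nat.add_sub_cancel, show m + 1 + 1 - 2 = m by omega]
  push_cast
  ring
end
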